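/- arXiv:2505.09635 — 11 statements merged into one kernel-verified Lean document; each statement's English description precedes it below -/
import Mathlib

section
/- Let a_1 < a_2 < ... < a_n be distinct integers and let A ∈ Mat_n(ℤ) have characteristic polynomial χ(x) = (x−a_1)(x−a_2)⋯(x−a_n). Then there exists P ∈ GL_n(ℤ) such that P A P⁻¹ is upper triangular with diagonal entries a_1, a_2, ..., a_n in that order. -/
/-!
Induction on `n`, over any principal ideal domain `R`. Since `a 0` is a root of the characteristic
polynomial, `a 0 - A` has a nonzero kernel `N`. A Smith normal form basis of `Rⁿ` adapted to `N`
has a basis vector `v` with `c • v ∈ N` for some `c ≠ 0`; as `Rⁿ` is torsion-free, `v` itself is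
an eigenvector for `a 0`. Changing to this basis, with `v` first, makes the first column of the
matrix `(a 0, 0, …, 0)`, so the lower-right block has characteristic polynomial
`∏ i > 0, (X - a i)`; it is triangularised by induction, and conjugating by `diag(1, Q)` finishes.
-/

open Polynomial Matrix

namespace Matrix

variable {R : Type*} {n : ℕ}

/-- The block-diagonal matrix `diag(1, Q)`. -/
def padOne [Semiring R] : Matrix (Fin n) (Fin n) R →* Matrix (Fin (n + 1)) (Fin (n + 1)) R where
  toFun Q := of (Fin.cons (Fin.cons 1 0) fun i => Fin.cons 0 (Q i))
  map_one' := by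
    ext i j
    cases i using Fin.cases <;> cases j using Fin.cases <;>
      simp [one_apply, Fin.succ_ne_zero, (Fin.succ_ne_zero _).symm]
  map_mul' Q Q' := by
    ext i j
    cases i using Fin.cases <;> cases j using Fin.cases <;> simp [mul_apply, Fin.sum_univ_succ]

section Semiring

variable [Semiring R]

@[simp] lemma padOne_zero_zero (Q : Matrix (Fin n) (Fin n) R) : padOne Q 0 0 = 1 := rfl

@[simp] lemma padOne_zero_succ (Q : Matrix (Fin n) (Fin n) R) (j : Fin n) :
    padOne Q 0 j.succ = 0 := rfl

@[simp] lemma padOne_succ_zero (Q : Matrix (Fin n) (Fin n) R) (i : Fin n) :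
    padOne Q i.succ 0 = 0 := rfl

@[simp] lemma padOne_succ_succ (Q : Matrix (Fin n) (Fin n) R) (i j : Fin n) :
    padOne Q i.succ j.succ = Q i j := rfl

lemma padOne_mul_mul_padOne_zero_zero (M : Matrix (Fin (n + 1)) (Fin (n + 1)) R)
    (Q Q' : Matrix (Fin n) (Fin n) R) :
    (padOne Q * M * padOne Q') 0 0 = M 0 0 := by
  simp [mul_apply, Fin.sum_univ_succ]

lemma padOne_mul_mul_padOne_succ_zero {M : Matrix (Fin (n + 1)) (Fin (n + 1)) R}
    (hM : ∀ i : Fin n, M i.succ 0 = 0) (Q Q' : Matrix (Fin n) (Fin n) R) (i : Fin n) :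
    (padOne Q * M * padOne Q') i.succ 0 = 0 := by
  simp [mul_apply, Fin.sum_univ_succ, hM]

lemma submatrix_succ_padOne_mul_mul_padOne (M : Matrix (Fin (n + 1)) (Fin (n + 1)) R)
    (Q Q' : Matrix (Fin n) (Fin n) R) :
    (padOne Q * M * padOne Q').submatrix Fin.succ Fin.succ =
      Q * M.submatrix Fin.succ Fin.succ * Q' := by
  ext i j
  simp [mul_apply, Fin.sum_univ_succ, Finset.sum_mul]

end Semiring

lemma blockTriangular_id_of_apply_succ_zero [Zero R] {M : Matrix (Fin (n + 1)) (Fin (n + 1)) R}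
    (hcol : ∀ i : Fin n, M i.succ 0 = 0)
    (hsub : (M.submatrix Fin.succ Fin.succ).BlockTriangular id) : M.BlockTriangular id := by
  intro i j hji
  cases j using Fin.cases with
  | zero =>
    cases i using Fin.cases with
    | zero => exact absurd hji (lt_irrefl _)
    | succ i => exact hcol i
  | succ j =>
    cases i using Fin.cases with
    | zero => exact absurd hji (Fin.not_lt_zero _)
    | succ i => exact hsub (Fin.succ_lt_succ_iff.mp hji)

section CommRing

variable [CommRing R]

lemma charmatrix_submatrix {m l : Type*} [Fintype m] [DecidableEq m] [Fintype l] [DecidableEq l]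
    (M : Matrix m m R) {e : l → m} (he : Function.Injective e) :
    charmatrix (M.submatrix e e) = (charmatrix M).submatrix e e := by
  ext i j
  obtain rfl | hij := eq_or_ne i j
  · simp
  · simp [charmatrix_apply_ne _ _ _ hij, charmatrix_apply_ne _ _ _ (he.ne hij)]

lemma det_of_apply_succ_zero_eq_zero {M : Matrix (Fin (n + 1)) (Fin (n + 1)) R}
    (hM : ∀ i : Fin n, M i.succ 0 = 0) :
    M.det = M 0 0 * (M.submatrix Fin.succ Fin.succ).det := by
  rw [det_succ_column_zero, Fin.sum_univ_succ]
  simp [hM]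

lemma charpoly_of_apply_succ_zero_eq_zero {M : Matrix (Fin (n + 1)) (Fin (n + 1)) R}
    (hM : ∀ i : Fin n, M i.succ 0 = 0) :
    M.charpoly = (X - C (M 0 0)) * (M.submatrix Fin.succ Fin.succ).charpoly := by
  rw [charpoly, det_of_apply_succ_zero_eq_zero, charpoly,
    charmatrix_submatrix _ (Fin.succ_injective n), charmatrix_apply_eq]
  intro i
  simp [hM]

end CommRing

end Matrix

section PID

variable {R : Type*} [CommRing R] [IsDomain R] [IsPrincipalIdealRing R]

lemma Submodule.exists_basis_smul_mem {M ι : Type*} [AddCommGroup M] [Module R M] [Finite ι]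
    [DecidableEq ι] (b₀ : Module.Basis ι R M) {N : Submodule R M} (hN : N ≠ ⊥) (i : ι) :
    ∃ (b : Module.Basis ι R M) (c : R), c ≠ 0 ∧ c • b i ∈ N := by
  obtain ⟨_ | r, snf⟩ := N.smithNormalForm b₀
  · have : Nontrivial N := Submodule.nontrivial_iff_ne_bot.mpr hN
    exact isEmptyElim (Classical.choice snf.bN.index_nonempty)
  refine ⟨snf.bM.reindex (Equiv.swap (snf.f 0) i), snf.a 0, fun h => ?_, ?_⟩
  · exact snf.bN.ne_zero 0 (Subtype.ext (by simp [snf.snf, h]))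
  · simp [← snf.snf]

namespace Matrix

variable {ι : Type*} [Fintype ι] [DecidableEq ι] {A : Matrix ι ι R} {μ : R}

lemma exists_basis_mulVec_eq_smul (hμ : A.charpoly.IsRoot μ) (i : ι) :
    ∃ b : Module.Basis ι R (ι → R), A *ᵥ b i = μ • b i := by
  have hker : LinearMap.ker (toLin' (scalar ι μ - A)) ≠ ⊥ := by
    have hdet : (scalar ι μ - A).det = 0 := by rw [← eval_charpoly]; exact hμ
    obtain ⟨v, hv0, hv⟩ := exists_mulVec_eq_zero_iff.mpr hdet
    exact (Submodule.ne_bot_iff _).mpr ⟨v, hv, hv0⟩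
  obtain ⟨b, c, hc, hcb⟩ := Submodule.exists_basis_smul_mem (Pi.basisFun R ι) hker i
  have hcb : c = 0 ∨ μ • b i - A *ᵥ b i = 0 := by simpa using hcb
  exact ⟨b, (sub_eq_zero.mp (hcb.resolve_left hc)).symm⟩

lemma exists_conj_apply_eq_single (hμ : A.charpoly.IsRoot μ) (i : ι) :
    ∃ U : GeneralLinearGroup ι R, ∀ j, (U.val * A * U⁻¹.val) j i = (Pi.single i μ : ι → R) j := by
  obtain ⟨b, hb⟩ := exists_basis_mulVec_eq_smul hμ i
  let e := Pi.basisFun R ι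
  let U : GeneralLinearGroup ι R :=
    ⟨b.toMatrix e, e.toMatrix b, b.toMatrix_mul_toMatrix_flip e, e.toMatrix_mul_toMatrix_flip b⟩
  have hU : U.val * A * U⁻¹.val = LinearMap.toMatrix b b (toLin' A) := by
    rw [← basis_toMatrix_mul_linearMap_toMatrix_mul_basis_toMatrix b e b e]
    exact congrArg (_ * · * _) (LinearMap.toMatrix_toLin e e A).symm
  refine ⟨U, fun j => ?_⟩
  rw [hU, LinearMap.toMatrix_apply, toLin'_apply, hb]
  simp [Finsupp.single_apply, Pi.single_apply, eq_comm]

theorem exists_conj_blockTriangular_of_charpoly_eq_prod {n : ℕ} (a : Fin n → R)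
    (A : Matrix (Fin n) (Fin n) R) (hA : A.charpoly = ∏ i, (X - C (a i))) :
    ∃ P : GeneralLinearGroup (Fin n) R,
      (P.val * A * P⁻¹.val).BlockTriangular id ∧ ∀ i, (P.val * A * P⁻¹.val) i i = a i := by
  induction n with
  | zero => exact ⟨1, fun i => i.elim0, fun i => i.elim0⟩
  | succ n ih =>
    have hroot : A.charpoly.IsRoot (a 0) := by
      rw [IsRoot, hA, eval_prod]
      exact Finset.prod_eq_zero (Finset.mem_univ 0) (by simp)
    obtain ⟨U, hU⟩ := exists_conj_apply_eq_single hroot 0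
    set M := U.val * A * U⁻¹.val
    have hM0 : M 0 0 = a 0 := by simpa using hU 0
    have hMcol : ∀ i : Fin n, M i.succ 0 = 0 := fun i => by simpa [Fin.succ_ne_zero] using hU i.succ
    have hB : (M.submatrix Fin.succ Fin.succ).charpoly = ∏ i : Fin n, (X - C (a i.succ)) := by
      have h := charpoly_of_apply_succ_zero_eq_zero hMcol
      rw [show M.charpoly = A.charpoly by simp [M], hA, Fin.prod_univ_succ, hM0] at h
      exact (mul_left_cancel₀ (X_sub_C_ne_zero (a 0)) h).symm
    obtain ⟨Q, hQtri, hQdiag⟩ := ih (fun i => a i.succ) _ hB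
    have hconj := submatrix_succ_padOne_mul_mul_padOne M Q.val Q⁻¹.val
    let P := Units.map padOne Q * U
    have hP : P.val * A * P⁻¹.val = padOne Q.val * M * padOne Q⁻¹.val := by
      simp only [P, M, _root_.mul_inv_rev, Units.val_mul, Units.coe_map, Units.coe_map_inv,
        mul_assoc]
    refine ⟨P, ?_, fun i => ?_⟩ <;> rw [hP]
    · exact blockTriangular_id_of_apply_succ_zero (padOne_mul_mul_padOne_succ_zero hMcol _ _)
        (hconj ▸ hQtri)
    · cases i using Fin.cases with
      | zero => rw [padOne_mul_mul_padOne_zero_zero, hM0]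
      | succ i => rw [← hQdiag, ← hconj, submatrix_apply]

end Matrix

end PID

theorem stmt_2_general (n : ℕ) (a : Fin n → ℤ)
    (A : Matrix (Fin n) (Fin n) ℤ)
    (hA : A.charpoly = ∏ i, (X - C (a i))) :
    ∃ P : Matrix.GeneralLinearGroup (Fin n) ℤ,
      ((P : Matrix (Fin n) (Fin n) ℤ) * A * ((P⁻¹ : Matrix.GeneralLinearGroup (Fin n) ℤ) :
          Matrix (Fin n) (Fin n) ℤ)).BlockTriangular id ∧
      ∀ i, ((P : Matrix (Fin n) (Fin n) ℤ) * A * ((P⁻¹ : Matrix.GeneralLinearGroup (Fin n) ℤ) :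
          Matrix (Fin n) (Fin n) ℤ)) i i = a i :=
  exists_conj_blockTriangular_of_charpoly_eq_prod a A hA

/-- A matrix over `ℤ` with characteristic polynomial `(x - a 1)⋯(x - a n)`,
where `a 1 < ⋯ < a n` are integers, is conjugate over `ℤ` to an upper triangular
matrix with diagonal entries `a 1, ..., a n` in that order. -/
theorem stmt_2 (n : ℕ) (a : Fin n → ℤ) (ha : StrictMono a)
    (A : Matrix (Fin n) (Fin n) ℤ)
    (hA : A.charpoly = ∏ i, (X - C (a i))) :
    ∃ P : Matrix.GeneralLinearGroup (Fin n) ℤ,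
      ((P : Matrix (Fin n) (Fin n) ℤ) * A * ((P⁻¹ : Matrix.GeneralLinearGroup (Fin n) ℤ) :
          Matrix (Fin n) (Fin n) ℤ)).BlockTriangular id ∧
      ∀ i, ((P : Matrix (Fin n) (Fin n) ℤ) * A * ((P⁻¹ : Matrix.GeneralLinearGroup (Fin n) ℤ) :
          Matrix (Fin n) (Fin n) ℤ)) i i = a i :=
  stmt_2_general n a A hA
end

section
/- Let a_1 < ... < a_n be integers, let Ω be the set of upper triangular matrices in Mat_n(ℤ) with diagonal (a_1, ..., a_n), and let Ω₀ ⊆ Ω consist of those matrices (c_{ij}) with 0 ≤ c_{ij} < a_j − a_i for all i < j. Then every matrix in Ω is conjugate, by a unipotent upper triangular matrix in GL_n(ℤ), to a matrix in Ω₀. -/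
/-!
Conjugating an upper triangular `B` by the transvection `1 + t E_{ik}` (`i < k`) adds
`t (B k k - B i i)` to the entry `(i, k)`, and otherwise only changes entries to the right of it in
row `i` and above it in column `k`. So the entries above the diagonal can be brought into
`[0, a k - a i)` one at a time by Euclidean division, treating the rows from the bottom up and
each row from left to right: an entry, once reduced, is never touched again.
-/

open Matrix OrderDual

namespace Matrix

variable {m R : Type*} [Fintype m] [LinearOrder m] [CommRing R]

theorem IsUpperTriangular.diag_mul {M N : Matrix m m R} (hM : M.IsUpperTriangular)
    (hN : N.IsUpperTriangular) : (M * N).diag = M.diag * N.diag := by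
  ext i
  simp only [diag_apply, mul_apply, Pi.mul_apply]
  refine Finset.sum_eq_single i (fun j _ hji => ?_) (by simp)
  rcases hji.lt_or_gt with hji | hij
  · rw [hM hji, zero_mul]
  · rw [hN hij, mul_zero]

namespace GeneralLinearGroup

variable (m R) in
def unitriangular : Subgroup (GL m R) where
  carrier := {P | (P : Matrix m m R).IsUpperTriangular ∧ (P : Matrix m m R).diag = 1}
  one_mem' := ⟨blockTriangular_one, diag_one⟩
  mul_mem' := by
    rintro P Q ⟨hPt, hPd⟩ ⟨hQt, hQd⟩
    refine ⟨hPt.mul hQt, ?_⟩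
    rw [coe_mul, hPt.diag_mul hQt, hPd, hQd, one_mul]
  inv_mem' := by
    rintro P ⟨hPt, hPd⟩
    have : Invertible (P : Matrix m m R) := P.invertible
    have hPinvt : ((P⁻¹ : GL m R) : Matrix m m R).IsUpperTriangular := by
      rw [coe_inv]; exact blockTriangular_inv_of_blockTriangular hPt
    refine ⟨hPinvt, ?_⟩
    have := hPt.diag_mul hPinvt
    rwa [← coe_mul, mul_inv_cancel, coe_one, diag_one, hPd, one_mul, eq_comm] at this

def transvection {i k : m} (hik : i ≠ k) (c : R) : GL m R :=
  ⟨Matrix.transvection i k c, Matrix.transvection i k (-c),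
    by rw [transvection_mul_transvection_same _ _ hik, add_neg_cancel, transvection_zero],
    by rw [transvection_mul_transvection_same _ _ hik, neg_add_cancel, transvection_zero]⟩

@[simp]
theorem coe_transvection {i k : m} (hik : i ≠ k) (c : R) :
    (transvection hik c : Matrix m m R) = Matrix.transvection i k c :=
  rfl

@[simp]
theorem coe_transvection_inv {i k : m} (hik : i ≠ k) (c : R) :
    ((transvection hik c)⁻¹ : GL m R) = Matrix.transvection i k (-c) :=
  rfl

theorem transvection_mem_unitriangular {i k : m} (hik : i < k) (c : R) :
    transvection hik.ne c ∈ unitriangular m R :=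
  ⟨blockTriangular_transvection hik.le c, by
    ext p
    simpa [Matrix.transvection, Matrix.single_apply] using
      fun hi hk => (hik.ne (hi.trans hk.symm)).elim⟩

end GeneralLinearGroup

theorem transvection_mul_mul_transvection_neg_apply (B : Matrix m m R) {i k : m}
    (hki : B k i = 0) (c : R) (p q : m) :
    (Matrix.transvection i k c * B * Matrix.transvection i k (-c)) p q =
      B p q + (if p = i then c * B k q else 0) - (if q = k then c * B p i else 0) := by
  by_cases hq : q = k <;> by_cases hp : p = i <;>
    simp [hq, hp, transvection_mul_apply_of_ne, mul_transvection_apply_of_ne, hki] <;> ring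

theorem exists_unitriangular_conj_reduce_entry {B : Matrix m m ℤ} (hB : B.IsUpperTriangular)
    {i k : m} (hik : i < k) (hd : B i i < B k k) :
    ∃ P ∈ GeneralLinearGroup.unitriangular m ℤ,
      (0 ≤ ((P : Matrix m m ℤ) * B * (P⁻¹ : GL m ℤ)) i k ∧
        ((P : Matrix m m ℤ) * B * (P⁻¹ : GL m ℤ)) i k < B k k - B i i) ∧
      ∀ p q, (p = i → q < k) → (q = k → i < p) →
        ((P : Matrix m m ℤ) * B * (P⁻¹ : GL m ℤ)) p q = B p q := by
  have hD : 0 < B k k - B i i := sub_pos.mpr hd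
  set t := -(B i k / (B k k - B i i)) with ht
  refine ⟨GeneralLinearGroup.transvection hik.ne t,
    GeneralLinearGroup.transvection_mem_unitriangular hik t, ?_, fun p q hp hq => ?_⟩ <;>
    rw [GeneralLinearGroup.coe_transvection, GeneralLinearGroup.coe_transvection_inv,
      transvection_mul_mul_transvection_neg_apply B (hB hik)]
  · rw [if_pos rfl, if_pos rfl, show B i k + t * B k k - t * B i i = B i k % (B k k - B i i) by
      rw [Int.emod_def, ht]; ring]
    exact ⟨Int.emod_nonneg _ hD.ne', Int.emod_lt_of_pos _ hD⟩
  · have hrow : (if p = i then t * B k q else 0) = 0 := by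
      split_ifs with h
      · rw [hB (hp h), mul_zero]
      · rfl
    have hcol : (if q = k then t * B p i else 0) = 0 := by
      split_ifs with h
      · rw [hB (hq h), mul_zero]
      · rfl
    rw [hrow, hcol, add_zero, sub_zero]

theorem exists_unitriangular_conj_reduced {A : Matrix m m ℤ} (hA : A.IsUpperTriangular)
    (hAd : StrictMono A.diag) :
    ∃ P ∈ GeneralLinearGroup.unitriangular m ℤ,
      (∀ p q, q ≤ p → ((P : Matrix m m ℤ) * A * (P⁻¹ : GL m ℤ)) p q = A p q) ∧
      ∀ i k, i < k → 0 ≤ ((P : Matrix m m ℤ) * A * (P⁻¹ : GL m ℤ)) i k ∧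
        ((P : Matrix m m ℤ) * A * (P⁻¹ : GL m ℤ)) i k < A k k - A i i := by
  suffices ∀ s : Finset (m × m), ∃ P ∈ GeneralLinearGroup.unitriangular m ℤ,
      (∀ p q, q ≤ p → ((P : Matrix m m ℤ) * A * (P⁻¹ : GL m ℤ)) p q = A p q) ∧
      ∀ x ∈ s, x.1 < x.2 → 0 ≤ ((P : Matrix m m ℤ) * A * (P⁻¹ : GL m ℤ)) x.1 x.2 ∧
        ((P : Matrix m m ℤ) * A * (P⁻¹ : GL m ℤ)) x.1 x.2 < A x.2 x.2 - A x.1 x.1 by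
    obtain ⟨P, hP, hlow, hred⟩ := this Finset.univ
    exact ⟨P, hP, hlow, fun i k hik => hred (i, k) (Finset.mem_univ _) hik⟩
  intro s
  induction s using Finset.induction_on_max_value (fun x : m × m => toLex (toDual x.1, x.2)) with
  | empty => exact ⟨1, one_mem _, by simp, by simp⟩
  | insert x s hx hmax ih =>
    obtain ⟨P, hP, hlow, hred⟩ := ih
    set C := (P : Matrix m m ℤ) * A * (P⁻¹ : GL m ℤ) with hC
    obtain ⟨i, k⟩ := x
    by_cases hik : i < k
    swap
    · refine ⟨P, hP, hlow, fun y hy hy12 => hred y ?_ hy12⟩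
      rcases Finset.mem_insert.mp hy with rfl | hy
      · exact (hik hy12).elim
      · exact hy
    have hCt : C.IsUpperTriangular := fun p q hqp => (hlow p q hqp.le).trans (hA hqp)
    have hCd : ∀ p, C p p = A p p := fun p => hlow p p le_rfl
    obtain ⟨Q, hQ, hQred, hQC⟩ := exists_unitriangular_conj_reduce_entry hCt hik
      (by rw [hCd, hCd]; exact hAd hik)
    have hconj : ((Q * P : GL m ℤ) : Matrix m m ℤ) * A * ((Q * P)⁻¹ : GL m ℤ) =
        (Q : Matrix m m ℤ) * C * (Q⁻¹ : GL m ℤ) := by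
      simp only [hC, _root_.mul_inv_rev, Units.val_mul, Matrix.mul_assoc]
    refine ⟨Q * P, mul_mem hQ hP, fun p q hqp => ?_, ?_⟩
    · rw [hconj, hQC p q (fun hp => (hp ▸ hqp).trans_lt hik)
        (fun hq => hik.trans_le (hq ▸ hqp)), hlow p q hqp]
    · rintro ⟨p, q⟩ hy hpq
      rw [hconj]
      rcases Finset.mem_insert.mp hy with hy | hs
      · obtain ⟨rfl, rfl⟩ := Prod.mk.inj hy
        rw [← hCd, ← hCd]
        exact hQred
      have hlt : toLex (toDual p, q) < toLex (toDual i, k) :=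
        (hmax _ hs).lt_of_ne fun h => hx <| by
          obtain ⟨rfl, rfl⟩ : p = i ∧ q = k := by simpa using h
          exact hs
      simp only [Prod.Lex.toLex_lt_toLex, toDual_lt_toDual, EmbeddingLike.apply_eq_iff_eq] at hlt
      have hQCpq : ((Q : Matrix m m ℤ) * C * (Q⁻¹ : GL m ℤ)) p q = C p q := by
        obtain hip | ⟨rfl, hqk⟩ := hlt
        · exact hQC p q (fun hpi => (hip.ne' hpi).elim) fun _ => hip
        · exact hQC p q (fun _ => hqk) fun hqk' => (hqk.ne hqk').elim
      simpa only [hQCpq] using hred _ hs hpq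

end Matrix

/-- Every upper triangular integer matrix with diagonal `a 1 < ⋯ < a n` is conjugate,
by a unipotent upper triangular matrix in `GL_n(ℤ)`, to an upper triangular matrix
whose `(i,j)` entry `c i j` satisfies `0 ≤ c i j < a j - a i` for all `i < j`. -/
theorem stmt_4 (n : ℕ) (a : Fin n → ℤ) (ha : StrictMono a)
    (A : Matrix (Fin n) (Fin n) ℤ)
    (hA : A.BlockTriangular id) (hAd : ∀ i, A i i = a i) :
    ∃ P : Matrix.GeneralLinearGroup (Fin n) ℤ,
      (P : Matrix (Fin n) (Fin n) ℤ).BlockTriangular id ∧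
      (∀ i, (P : Matrix (Fin n) (Fin n) ℤ) i i = 1) ∧
      (let B := (P : Matrix (Fin n) (Fin n) ℤ) * A *
        ((P⁻¹ : Matrix.GeneralLinearGroup (Fin n) ℤ) : Matrix (Fin n) (Fin n) ℤ)
       B.BlockTriangular id ∧ (∀ i, B i i = a i) ∧
         ∀ i j : Fin n, i < j → 0 ≤ B i j ∧ B i j < a j - a i) := by
  have hdiag : A.diag = a := funext hAd
  obtain ⟨P, ⟨hPt, hPd⟩, hlow, hred⟩ := exists_unitriangular_conj_reduced hA (hdiag ▸ ha)
  refine ⟨P, hPt, congrFun hPd, fun p q hqp => (hlow p q hqp.le).trans (hA hqp),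
    fun i => (hlow i i le_rfl).trans (hAd i), fun i k hik => ?_⟩
  simpa only [hAd] using hred i k hik
end

section
/- Let a_1 < ... < a_n be integers and let Ω₀ be the set of upper triangular integer matrices with diagonal (a_1, ..., a_n) and (i,j)-entry c_{ij} satisfying 0 ≤ c_{ij} < a_j − a_i for i < j. If A, B ∈ Ω₀ and P is a unipotent upper triangular matrix in GL_n(ℤ) with P A P⁻¹ = B, then P = I_n and A = B. -/
/-!
Comparing the `(i, j)` entries of `P A = B P`, by induction on `j - i`: once the entries of `P`
strictly between `i` and `j` in row `i` and column `j` are known to vanish, the entry reads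
`A i j + P i j * a j = a i * P i j + B i j`, i.e. `P i j * (a j - a i) = B i j - A i j`.
Both `A i j` and `B i j` lie in `[0, a j - a i)`, so the right side is a multiple of `a j - a i`
of absolute value less than `a j - a i`; hence `P i j = 0` and `A i j = B i j`.
-/

namespace Matrix.BlockTriangular

variable {ι R : Type*} [LinearOrder ι]

theorem eq_of_forall_le [Zero R] {X Y : Matrix ι ι R} (hX : X.BlockTriangular id)
    (hY : Y.BlockTriangular id) (h : ∀ i j, i ≤ j → X i j = Y i j) : X = Y := by
  ext i j
  rcases le_or_gt i j with hij | hji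
  · exact h i j hij
  · rw [hX hji, hY hji]

theorem mul_apply_of_forall_between [Fintype ι] [NonUnitalNonAssocSemiring R]
    {X Y : Matrix ι ι R} (hX : X.BlockTriangular id) (hY : Y.BlockTriangular id) {i j : ι}
    (hij : i < j) (h : ∀ k, i < k → k < j → X i k * Y k j = 0) :
    (X * Y) i j = X i i * Y i j + X i j * Y j j := by
  rw [mul_apply]
  refine Fintype.sum_eq_add i j hij.ne fun k ⟨hki, hkj⟩ => ?_
  rcases lt_or_gt_of_ne hki with hk | hk
  · rw [hX hk, zero_mul]
  rcases lt_or_gt_of_ne hkj with hk' | hk'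
  · exact h k hk hk'
  · rw [hY hk', mul_zero]

end Matrix.BlockTriangular

theorem Int.eq_zero_of_mul_eq_sub_of_mem_Ico {x d u v : ℤ} (hu : u ∈ Set.Ico 0 d)
    (hv : v ∈ Set.Ico 0 d) (h : x * d = v - u) : x = 0 := by
  have hd : 0 < d := hu.1.trans_lt hu.2
  have hvu : v - u = 0 :=
    Int.eq_zero_of_abs_lt_dvd ⟨x, by rw [← h, mul_comm]⟩
      (abs_sub_lt_iff.2 ⟨by linarith [hu.1, hv.2], by linarith [hu.2, hv.1]⟩)
  rw [hvu] at h
  exact (mul_eq_zero.1 h).resolve_right hd.ne'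

theorem unipotent_intertwiner_apply_eq_zero_and_eq {n : ℕ} {a : Fin n → ℤ}
    {A B P : Matrix (Fin n) (Fin n) ℤ}
    (hA : A.BlockTriangular id) (hAd : ∀ i, A i i = a i)
    (hA0 : ∀ i j : Fin n, i < j → 0 ≤ A i j ∧ A i j < a j - a i)
    (hB : B.BlockTriangular id) (hBd : ∀ i, B i i = a i)
    (hB0 : ∀ i j : Fin n, i < j → 0 ≤ B i j ∧ B i j < a j - a i)
    (hPu : P.BlockTriangular id) (hPd : ∀ i, P i i = 1) (hPA : P * A = B * P)
    {i j : Fin n} (hij : i < j) : P i j = 0 ∧ A i j = B i j := by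
  induction hd : (j : ℕ) - i using Nat.strong_induction_on generalizing i j with
  | _ d ih =>
    have hP_between : ∀ k, i < k → k < j → P i k = 0 ∧ P k j = 0 := fun k hik hkj =>
      ⟨(ih _ (by omega) hik rfl).1, (ih _ (by omega) hkj rfl).1⟩
    have hentry := congrFun (congrFun hPA i) j
    rw [hPu.mul_apply_of_forall_between hA hij
        fun k hik hkj => by rw [(hP_between k hik hkj).1, zero_mul],
      hB.mul_apply_of_forall_between hPu hij
        fun k hik hkj => by rw [(hP_between k hik hkj).2, mul_zero],
      hPd, hPd, hAd, hBd] at hentry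
    have hPij : P i j = 0 :=
      Int.eq_zero_of_mul_eq_sub_of_mem_Ico (hA0 i j hij) (hB0 i j hij) (by linarith)
    rw [hPij] at hentry
    exact ⟨hPij, by linarith⟩

theorem stmt_5_general (n : ℕ) (a : Fin n → ℤ)
    (A B : Matrix (Fin n) (Fin n) ℤ)
    (hA : A.BlockTriangular id) (hAd : ∀ i, A i i = a i)
    (hA0 : ∀ i j : Fin n, i < j → 0 ≤ A i j ∧ A i j < a j - a i)
    (hB : B.BlockTriangular id) (hBd : ∀ i, B i i = a i)
    (hB0 : ∀ i j : Fin n, i < j → 0 ≤ B i j ∧ B i j < a j - a i)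
    (P : Matrix.GeneralLinearGroup (Fin n) ℤ)
    (hPu : (P : Matrix (Fin n) (Fin n) ℤ).BlockTriangular id)
    (hPd : ∀ i, (P : Matrix (Fin n) (Fin n) ℤ) i i = 1)
    (hP : (P : Matrix (Fin n) (Fin n) ℤ) * A *
        ((P⁻¹ : Matrix.GeneralLinearGroup (Fin n) ℤ) : Matrix (Fin n) (Fin n) ℤ) = B) :
    P = 1 ∧ A = B := by
  have hPA : (P : Matrix (Fin n) (Fin n) ℤ) * A = B * P := by
    rw [← hP, Matrix.mul_assoc _ _ (P : Matrix (Fin n) (Fin n) ℤ), Units.inv_mul, Matrix.mul_one]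
  have hentry {i j : Fin n} (hij : i < j) :=
    unipotent_intertwiner_apply_eq_zero_and_eq hA hAd hA0 hB hBd hB0 hPu hPd hPA hij
  refine ⟨Units.ext <| hPu.eq_of_forall_le Matrix.blockTriangular_one fun i j hij => ?_,
    hA.eq_of_forall_le hB fun i j hij => ?_⟩
  · rcases hij.lt_or_eq with hij | rfl
    · rw [(hentry hij).1, Units.val_one, Matrix.one_apply_ne hij.ne]
    · rw [hPd, Units.val_one, Matrix.one_apply_eq]
  · rcases hij.lt_or_eq with hij | rfl
    · exact (hentry hij).2
    · rw [hAd, hBd]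

/-- No two distinct matrices in `Ω₀` (upper triangular, diagonal `a 1 < ⋯ < a n`,
entries `0 ≤ c i j < a j - a i` above the diagonal) are conjugate under a unipotent
upper triangular matrix: if `P A P⁻¹ = B` with `P` unipotent, then `P = 1` and `A = B`. -/
theorem stmt_5 (n : ℕ) (a : Fin n → ℤ) (ha : StrictMono a)
    (A B : Matrix (Fin n) (Fin n) ℤ)
    (hA : A.BlockTriangular id) (hAd : ∀ i, A i i = a i)
    (hA0 : ∀ i j : Fin n, i < j → 0 ≤ A i j ∧ A i j < a j - a i)
    (hB : B.BlockTriangular id) (hBd : ∀ i, B i i = a i)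
    (hB0 : ∀ i j : Fin n, i < j → 0 ≤ B i j ∧ B i j < a j - a i)
    (P : Matrix.GeneralLinearGroup (Fin n) ℤ)
    (hPu : (P : Matrix (Fin n) (Fin n) ℤ).BlockTriangular id)
    (hPd : ∀ i, (P : Matrix (Fin n) (Fin n) ℤ) i i = 1)
    (hP : (P : Matrix (Fin n) (Fin n) ℤ) * A *
        ((P⁻¹ : Matrix.GeneralLinearGroup (Fin n) ℤ) : Matrix (Fin n) (Fin n) ℤ) = B) :
    P = 1 ∧ A = B :=
  stmt_5_general n a A B hA hAd hA0 hB hBd hB0 P hPu hPd hP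
end

section
/- Let a_1 < ... < a_n be integers. The number of orbits of the conjugation action of the unipotent upper triangular group U_n(ℤ) on the set of upper triangular integer matrices with diagonal (a_1, ..., a_n) equals Δ = ∏_{i<j} (a_j − a_i). -/
/-!
Conjugating by the transvection `1 + t • E i j` (`i < j`) adds `t * (a j - a i)` to the entry
`(i, j)` and changes only entries `(r, s)` with `r ≤ i` and `j ≤ s`, which lie strictly further
from the diagonal. Fixing one superdiagonal after another therefore moves every matrix into the
box `0 ≤ M i j < a j - a i`. Conversely, if `P` is unitriangular and `P * B = B' * P` for two
matrices in the box, comparing `(i, j)` entries by induction on `j - i` gives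
`P i j * (a j - a i) = B' i j - B i j`, so `P i j = 0`; hence `P = 1` and `B = B'`. The orbits
are thus counted by the box, which has `∏_{i<j} (a j - a i)` elements.
-/

open Finset

namespace Matrix

variable {ι R : Type*} [LinearOrder ι] [Fintype ι]

section Semiring

variable [NonUnitalNonAssocSemiring R]

theorem IsUpperTriangular.mul_apply_eq_sum_Icc [LocallyFiniteOrder ι] {M N : Matrix ι ι R}
    (hM : M.IsUpperTriangular) (hN : N.IsUpperTriangular) (i j : ι) :
    (M * N) i j = ∑ k ∈ Icc i j, M i k * N k j := by
  rw [Matrix.mul_apply]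
  refine (sum_subset (subset_univ _) fun k _ hk => ?_).symm
  rcases lt_or_ge k i with hki | hik
  · rw [hM hki, zero_mul]
  · rw [hN (lt_of_not_ge fun hkj => hk (mem_Icc.2 ⟨hik, hkj⟩)), mul_zero]

theorem IsUpperTriangular.mul_apply_of_lt [LocallyFiniteOrder ι] {M N : Matrix ι ι R}
    (hM : M.IsUpperTriangular) (hN : N.IsUpperTriangular) {i j : ι} (hij : i < j) :
    (M * N) i j = M i i * N i j + M i j * N j j + ∑ k ∈ Ioo i j, M i k * N k j := by
  rw [hM.mul_apply_eq_sum_Icc hN, Icc_eq_cons_Ioc hij.le, sum_cons, Ioc_eq_cons_Ioo hij, sum_cons,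
    add_assoc]

theorem IsUpperTriangular.mul_apply_self {M N : Matrix ι ι R}
    (hM : M.IsUpperTriangular) (hN : N.IsUpperTriangular) (i : ι) :
    (M * N) i i = M i i * N i i := by
  refine (Matrix.mul_apply ..).trans (sum_eq_single i (fun k _ hki => ?_) (by simp))
  rcases hki.lt_or_gt with hki | hik
  · rw [hM hki, zero_mul]
  · rw [hN hik, mul_zero]

end Semiring

variable [CommRing R] [DecidableEq ι]

variable (ι R) in
def unitriangular : Subgroup (GL ι R) where
  carrier := {P | (P : Matrix ι ι R).IsUpperTriangular ∧ ∀ i, (P : Matrix ι ι R) i i = 1}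
  mul_mem' := by
    rintro P Q ⟨hP, hP1⟩ ⟨hQ, hQ1⟩
    refine ⟨by simpa using hP.mul hQ, fun i => ?_⟩
    rw [Units.val_mul, hP.mul_apply_self hQ, hP1, hQ1, one_mul]
  one_mem' := ⟨blockTriangular_one, one_apply_eq⟩
  inv_mem' := by
    rintro P ⟨hP, hP1⟩
    have hPinv : (↑P⁻¹ : Matrix ι ι R).IsUpperTriangular := by
      have := P.invertible
      rw [coe_units_inv]
      exact blockTriangular_inv_of_blockTriangular hP
    refine ⟨hPinv, fun i => ?_⟩
    simpa [hP1] using (hP.mul_apply_self hPinv i).symm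

def transvectionGL {i j : ι} (hij : i ≠ j) (t : R) : GL ι R where
  val := transvection i j t
  inv := transvection i j (-t)
  val_inv := by rw [transvection_mul_transvection_same _ _ hij, add_neg_cancel, transvection_zero]
  inv_val := by rw [transvection_mul_transvection_same _ _ hij, neg_add_cancel, transvection_zero]

theorem transvectionGL_mem_unitriangular {i j : ι} (hij : i < j) (t : R) :
    transvectionGL hij.ne t ∈ unitriangular ι R := by
  refine ⟨fun r s (hsr : s < r) => ?_, fun r => ?_⟩
  · have hne : ¬(i = r ∧ j = s) := fun ⟨hir, hjs⟩ => (hij.trans (hir ▸ hjs ▸ hsr)).false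
    simp [transvectionGL, transvection, one_apply_ne hsr.ne', single_apply_of_ne, hne]
  · have hne : ¬(i = r ∧ j = r) := fun ⟨hir, hjr⟩ => hij.ne (hir.trans hjr.symm)
    simp [transvectionGL, transvection, hne]

theorem IsUpperTriangular.transvection_conj_apply_same {A : Matrix ι ι R}
    (hA : A.IsUpperTriangular) {i j : ι} (hij : i < j) (t : R) :
    (transvection i j t * A * transvection i j (-t)) i j = A i j + t * (A j j - A i i) := by
  simp only [mul_transvection_apply_same, transvection_mul_apply_same, hA hij]
  ring

theorem IsUpperTriangular.transvection_conj_apply_of_not_le {A : Matrix ι ι R}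
    (hA : A.IsUpperTriangular) {i j : ι} (t : R) {r s : ι} (hrs : ¬(r ≤ i ∧ j ≤ s)) :
    (transvection i j t * A * transvection i j (-t)) r s = A r s := by
  by_cases hsj : s = j
  · subst hsj
    have hir : i < r := lt_of_not_ge fun hri => hrs ⟨hri, le_rfl⟩
    rw [mul_transvection_apply_same, transvection_mul_apply_of_ne _ _ _ _ hir.ne',
      transvection_mul_apply_of_ne _ _ _ _ hir.ne', hA hir, mul_zero, add_zero]
  · rw [mul_transvection_apply_of_ne _ _ _ _ hsj]
    by_cases hri : r = i
    · subst hri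
      have hsj' : s < j := lt_of_not_ge fun hjs => hrs ⟨le_rfl, hjs⟩
      rw [transvection_mul_apply_same, hA hsj', mul_zero, add_zero]
    · rw [transvection_mul_apply_of_ne _ _ _ _ hri]

end Matrix

theorem Int.eq_zero_of_mul_eq_sub_of_mem_Ico_s6 {d x y p : ℤ} (hx : x ∈ Set.Ico 0 d)
    (hy : y ∈ Set.Ico 0 d) (h : p * d = y - x) : p = 0 := by
  obtain ⟨hx0, hxd⟩ := hx
  obtain ⟨hy0, hyd⟩ := hy
  rcases lt_trichotomy p 0 with hp | hp | hp
  · nlinarith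
  · exact hp
  · nlinarith

namespace UpperTriangularOrbits

open Matrix

variable {n : ℕ} (a : Fin n → ℤ)

abbrev UpperWithDiag : Type :=
  {M : Matrix (Fin n) (Fin n) ℤ // M.IsUpperTriangular ∧ ∀ i, M i i = a i}

def ConjRel (A B : UpperWithDiag a) : Prop :=
  ∃ P : GL (Fin n) ℤ, (P : Matrix (Fin n) (Fin n) ℤ).IsUpperTriangular ∧
    (∀ i, (P : Matrix (Fin n) (Fin n) ℤ) i i = 1) ∧
    (P : Matrix (Fin n) (Fin n) ℤ) * (A : Matrix (Fin n) (Fin n) ℤ) *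
      ((P⁻¹ : GL (Fin n) ℤ) : Matrix (Fin n) (Fin n) ℤ) = B

theorem conjRel_equivalence : Equivalence (ConjRel a) where
  refl A := ⟨1, blockTriangular_one, one_apply_eq, by simp⟩
  symm := by
    rintro A B ⟨P, hP, hP1, hPAB⟩
    obtain ⟨hQ, hQ1⟩ := (unitriangular (Fin n) ℤ).inv_mem ⟨hP, hP1⟩
    refine ⟨P⁻¹, hQ, hQ1, ?_⟩
    rw [← hPAB, inv_inv]
    simp [Matrix.mul_assoc]
  trans := by
    rintro A B C ⟨P, hP, hP1, hPAB⟩ ⟨Q, hQ, hQ1, hQBC⟩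
    obtain ⟨hQP, hQP1⟩ := (unitriangular (Fin n) ℤ).mul_mem ⟨hQ, hQ1⟩ ⟨hP, hP1⟩
    refine ⟨Q * P, hQP, hQP1, ?_⟩
    rw [← hQBC, ← hPAB]
    simp [Matrix.mul_assoc]

def IsReducedAt (M : Matrix (Fin n) (Fin n) ℤ) (i j : Fin n) : Prop :=
  M i j ∈ Set.Ico 0 (a j - a i)

def IsReduced (M : Matrix (Fin n) (Fin n) ℤ) : Prop :=
  ∀ i j, i < j → IsReducedAt a M i j

variable {a}

theorem exists_conjRel_add_mul_sub (A : UpperWithDiag a) {i j : Fin n} (hij : i < j) (t : ℤ) :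
    ∃ B, ConjRel a A B ∧ B.1 i j = A.1 i j + t * (a j - a i) ∧
      ∀ r s, ¬(r ≤ i ∧ j ≤ s) → B.1 r s = A.1 r s := by
  have hconj : ∀ r s, ¬(r ≤ i ∧ j ≤ s) →
      (transvection i j t * A.1 * transvection i j (-t)) r s = A.1 r s :=
    fun _ _ => A.2.1.transvection_conj_apply_of_not_le t
  have hupper : (transvection i j t * A.1 * transvection i j (-t)).IsUpperTriangular :=
    fun r s (hsr : s < r) =>
      (hconj r s fun h => (h.1.trans_lt hij).not_ge (h.2.trans hsr.le)).trans (A.2.1 hsr)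
  refine ⟨⟨_, hupper, fun r => ?_⟩, ?_, ?_, hconj⟩
  · rw [hconj r r fun h => (h.1.trans_lt hij).not_ge h.2, A.2.2]
  · obtain ⟨hP, hP1⟩ := transvectionGL_mem_unitriangular hij t
    exact ⟨transvectionGL hij.ne t, hP, hP1, rfl⟩
  · exact (A.2.1.transvection_conj_apply_same hij t).trans (by rw [A.2.2, A.2.2])

theorem exists_conjRel_isReducedAt_of_lt_or_mem (ha : StrictMono a) {d : ℕ} (A : UpperWithDiag a)
    (hA : ∀ i j : Fin n, i < j → (j : ℕ) - i < d → IsReducedAt a A.1 i j)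
    (S : Finset (Fin n × Fin n)) (hS : ∀ p ∈ S, p.1 < p.2 ∧ (p.2 : ℕ) - p.1 = d) :
    ∃ B, ConjRel a A B ∧
      ∀ i j : Fin n, i < j → ((j : ℕ) - i < d ∨ (i, j) ∈ S) → IsReducedAt a B.1 i j := by
  induction S using Finset.induction_on with
  | empty => exact ⟨A, (conjRel_equivalence a).refl A, by simpa using hA⟩
  | @insert p S _ ih =>
    obtain ⟨k, l⟩ := p
    obtain ⟨B, hAB, hB⟩ := ih fun q hq => hS q (Finset.mem_insert_of_mem hq)
    obtain ⟨hkl, hkld⟩ : k < l ∧ (l : ℕ) - k = d := hS _ (Finset.mem_insert_self _ S)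
    have hpos : 0 < a l - a k := sub_pos.2 (ha hkl)
    obtain ⟨C, hBC, hCkl, hC⟩ := exists_conjRel_add_mul_sub B hkl (-(B.1 k l / (a l - a k)))
    refine ⟨C, (conjRel_equivalence a).trans hAB hBC, fun i j hij hij' => ?_⟩
    by_cases hijkl : (i, j) = (k, l)
    · obtain ⟨rfl, rfl⟩ := Prod.mk.inj hijkl
      have hCmod : C.1 i j = B.1 i j % (a j - a i) := by rw [hCkl, Int.emod_def]; ring
      rw [IsReducedAt, hCmod]
      exact ⟨Int.emod_nonneg _ hpos.ne', Int.emod_lt_of_pos _ hpos⟩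
    · have hij'' : (j : ℕ) - i < d ∨ (i, j) ∈ S := by simpa [hijkl] using hij'
      have houtside : ¬(i ≤ k ∧ l ≤ j) := by
        rintro ⟨hi, hj⟩
        have : (i : ℕ) = k ∧ (j : ℕ) = l := by
          rcases hij'' with h | h
          · omega
          · have : (j : ℕ) - i = d := (hS (i, j) (Finset.mem_insert_of_mem h)).2
            omega
        exact hijkl (Prod.ext (Fin.ext this.1) (Fin.ext this.2))
      rw [IsReducedAt, hC i j houtside]
      exact hB i j hij hij''

theorem exists_conjRel_isReduced (ha : StrictMono a) (A : UpperWithDiag a) :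
    ∃ B, ConjRel a A B ∧ IsReduced a B.1 := by
  have hbelow : ∀ d : ℕ, ∃ B, ConjRel a A B ∧
      ∀ i j : Fin n, i < j → (j : ℕ) - i < d → IsReducedAt a B.1 i j := by
    intro d
    induction d with
    | zero => exact ⟨A, (conjRel_equivalence a).refl A, by simp⟩
    | succ d ih =>
      obtain ⟨B, hAB, hB⟩ := ih
      obtain ⟨C, hBC, hC⟩ := exists_conjRel_isReducedAt_of_lt_or_mem ha B hB
        (Finset.univ.filter fun p => p.1 < p.2 ∧ (p.2 : ℕ) - p.1 = d) (by simp)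
      refine ⟨C, (conjRel_equivalence a).trans hAB hBC, fun i j hij hd => hC i j hij ?_⟩
      simp only [Finset.mem_filter, Finset.mem_univ, true_and]
      omega
  obtain ⟨B, hAB, hB⟩ := hbelow n
  exact ⟨B, hAB, fun i j hij => hB i j hij (by omega)⟩

theorem IsReduced.eq_one_of_mul_eq_mul {P : Matrix (Fin n) (Fin n) ℤ}
    (hP : P.IsUpperTriangular) (hP1 : ∀ i, P i i = 1) {B B' : UpperWithDiag a}
    (hB : IsReduced a B.1) (hB' : IsReduced a B'.1) (h : P * B.1 = B'.1 * P) : P = 1 := by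
  have hoff : ∀ d, ∀ i j : Fin n, i < j → (j : ℕ) - i = d → P i j = 0 := by
    intro d
    induction d using Nat.strong_induction_on with
    | _ d ih =>
      intro i j hij hd
      have hleft : ∑ k ∈ Finset.Ioo i j, P i k * B.1 k j = 0 :=
        Finset.sum_eq_zero fun k hk => by
          obtain ⟨hik, hkj⟩ := Finset.mem_Ioo.1 hk
          rw [ih _ (by omega) i k hik rfl, zero_mul]
      have hright : ∑ k ∈ Finset.Ioo i j, B'.1 i k * P k j = 0 :=
        Finset.sum_eq_zero fun k hk => by
          obtain ⟨hik, hkj⟩ := Finset.mem_Ioo.1 hk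
          rw [ih _ (by omega) k j hkj rfl, mul_zero]
      have hij_entry := congrFun (congrFun h i) j
      rw [hP.mul_apply_of_lt B.2.1 hij, B'.2.1.mul_apply_of_lt hP hij, hleft, hright, hP1, hP1,
        B.2.2, B'.2.2] at hij_entry
      exact Int.eq_zero_of_mul_eq_sub_of_mem_Ico_s6 (hB i j hij) (hB' i j hij) (by linarith)
  ext i j
  rcases lt_trichotomy i j with hij | rfl | hji
  · rw [hoff _ i j hij rfl, one_apply_ne hij.ne]
  · rw [hP1, one_apply_eq]
  · rw [hP hji, one_apply_ne hji.ne']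

theorem IsReduced.eq_of_conjRel {B B' : UpperWithDiag a}
    (hB : IsReduced a B.1) (hB' : IsReduced a B'.1) (h : ConjRel a B B') : B = B' := by
  obtain ⟨P, hP, hP1, hPB⟩ := h
  have hcomm : (P : Matrix (Fin n) (Fin n) ℤ) * B.1 = B'.1 * P := by
    rw [← hPB]
    simp [Matrix.mul_assoc]
  have hP_one := hB.eq_one_of_mul_eq_mul hP hP1 hB' hcomm
  rw [hP_one, Matrix.one_mul, Matrix.mul_one] at hcomm
  exact Subtype.ext hcomm

variable (a) in
def isReducedEquivPi : {B : UpperWithDiag a // IsReduced a B.1} ≃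
    ((p : {p : Fin n × Fin n // p.1 < p.2}) → Set.Ico 0 (a p.1.2 - a p.1.1)) where
  toFun B p := ⟨B.1.1 p.1.1 p.1.2, B.2 _ _ p.2⟩
  invFun f := by
    refine ⟨⟨Matrix.of fun i j =>
        if h : i < j then (f ⟨(i, j), h⟩ : ℤ) else if i = j then a i else 0,
      fun i j (hji : j < i) => ?_, fun i => ?_⟩, fun i j hij => ?_⟩
    · simp [hji.not_gt, hji.ne']
    · simp
    · simp [IsReducedAt, hij]
  left_inv B := by
    ext i j
    rcases lt_trichotomy i j with hij | rfl | hji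
    · simp [hij]
    · simp [B.1.2.2]
    · simp [hji.not_gt, hji.ne', B.1.2.1 hji]
  right_inv f := by
    ext p
    simp [p.2]

theorem card_isReduced (ha : StrictMono a) :
    (Nat.card {B : UpperWithDiag a // IsReduced a B.1} : ℤ) =
      ∏ p ∈ Finset.univ.filter (fun p : Fin n × Fin n => p.1 < p.2), (a p.2 - a p.1) := by
  rw [Nat.card_congr (isReducedEquivPi a), Nat.card_pi, Nat.cast_prod,
    Finset.prod_subtype _ (p := fun p : Fin n × Fin n => p.1 < p.2) (by simp)]
  refine Finset.prod_congr rfl fun p _ => ?_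
  rw [Nat.card_eq_fintype_card, Int.card_fintype_Ico_of_le _ _ (sub_nonneg.2 (ha p.2).le),
    sub_zero]

theorem bijective_quotMk_isReduced (ha : StrictMono a) :
    Function.Bijective
      fun B : {B : UpperWithDiag a // IsReduced a B.1} => Quot.mk (ConjRel a) B.1 :=
  ⟨fun B B' h => Subtype.ext <|
      B.2.eq_of_conjRel B'.2 ((conjRel_equivalence a).eqvGen_iff.1 (Quot.eqvGen_exact h)),
    Quot.ind fun A =>
      let ⟨B, hAB, hB⟩ := exists_conjRel_isReduced ha A
      ⟨⟨B, hB⟩, (Quot.sound hAB).symm⟩⟩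

end UpperTriangularOrbits

/-- The number of orbits of the conjugation action of the unipotent upper triangular
group `U_n(ℤ)` on the set `Ω` of upper triangular integer matrices with diagonal
`a 1 < ⋯ < a n` equals `Δ = ∏_{i<j} (a j - a i)`. -/
theorem stmt_6 (n : ℕ) (a : Fin n → ℤ) (ha : StrictMono a) :
    (Nat.card (Quot (fun A B : {M : Matrix (Fin n) (Fin n) ℤ //
        M.BlockTriangular id ∧ ∀ i, M i i = a i} =>
      ∃ P : Matrix.GeneralLinearGroup (Fin n) ℤ,
        (P : Matrix (Fin n) (Fin n) ℤ).BlockTriangular id ∧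
        (∀ i, (P : Matrix (Fin n) (Fin n) ℤ) i i = 1) ∧
        (P : Matrix (Fin n) (Fin n) ℤ) * (A : Matrix (Fin n) (Fin n) ℤ) *
          ((P⁻¹ : Matrix.GeneralLinearGroup (Fin n) ℤ) : Matrix (Fin n) (Fin n) ℤ) = B)) : ℤ) =
    ∏ p ∈ Finset.univ.filter (fun p : Fin n × Fin n => p.1 < p.2), (a p.2 - a p.1) := by
  rw [← UpperTriangularOrbits.card_isReduced ha]
  exact congrArg Nat.cast (Nat.card_eq_of_bijective _
    (UpperTriangularOrbits.bijective_quotMk_isReduced ha)).symm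
end

section
/- Let a < b be integers and R = ℤ[x]/((x−a)(x−b)). The number of ℤ-conjugacy classes of matrices in Mat_2(ℤ) with characteristic polynomial (x−a)(x−b) equals ⌊(b−a)/2⌋ + 1. -/
open Polynomial Matrix

/-!
The eigenvalue `a` of `A` has a primitive eigenvector in `ℤ²`; completing it to a basis
conjugates `A` to `!![a, m; 0, b]`. A matrix in `GL₂(ℤ)` conjugating two such triangular
matrices is itself upper triangular with diagonal entries `±1`, so `!![a, m; 0, b]` and
`!![a, m'; 0, b]` are conjugate exactly when `m' ≡ ±m (mod b - a)`. Hence every class has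
exactly one representative with `0 ≤ m ≤ (b - a) / 2`.
-/

theorem isConj_iff_exists_units_mul_mul_inv {M : Type*} [Monoid M] {a b : M} :
    IsConj a b ↔ ∃ c : Mˣ, ↑c * a * ↑c⁻¹ = b :=
  ⟨fun ⟨c, hc⟩ => ⟨c, (Units.mul_inv_eq_iff_eq_mul c).2 hc⟩,
    fun ⟨c, hc⟩ => ⟨c, (Units.mul_inv_eq_iff_eq_mul c).1 hc⟩⟩

theorem natCard_quot_eq_of_transversal {S ι : Type*} {r : S → S → Prop} (hr : Equivalence r)
    (f : ι → S) (hinj : ∀ i j, r (f i) (f j) → i = j) (hsurj : ∀ x, ∃ i, r (f i) x) :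
    Nat.card (Quot r) = Nat.card ι :=
  (Nat.card_eq_of_bijective (Quot.mk r ∘ f)
    ⟨fun i j h => hinj i j (hr.eqvGen_iff.1 (Quot.eqvGen_exact h)),
      Quot.ind fun x => (hsurj x).imp fun _ => Quot.sound⟩).symm

theorem Matrix.charpoly_eq_of_isConj {n R : Type*} [Fintype n] [DecidableEq n] [CommRing R]
    {A B : Matrix n n R} (h : IsConj A B) : A.charpoly = B.charpoly := by
  obtain ⟨c, rfl⟩ := isConj_iff_exists_units_mul_mul_inv.1 h
  rw [coe_units_inv, charpoly_units_conj]

theorem Matrix.charpoly_upperTriangular_fin_two {R : Type*} [CommRing R] [Nontrivial R]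
    (a m b : R) : (!![a, m; 0, b]).charpoly = (X - C a) * (X - C b) := by
  rw [charpoly_fin_two, trace_fin_two_of, det_fin_two_of]
  simp only [mul_zero, sub_zero, C_add, C_mul]
  ring

theorem exists_isCoprime_mulVec_eq_zero {M : Matrix (Fin 2) (Fin 2) ℤ} (hM : M.det = 0) :
    ∃ u w : ℤ, IsCoprime u w ∧ M *ᵥ ![u, w] = 0 := by
  obtain ⟨v, hv, hMv⟩ := exists_mulVec_eq_zero_iff.2 hM
  have hgcd : 0 < Int.gcd (v 0) (v 1) := Int.gcd_pos_iff.2 <| by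
    by_contra! h
    exact hv (funext fun i => by fin_cases i <;> simp [h.1, h.2])
  obtain ⟨g, u, w, hg, huw, hu, hw⟩ := Int.exists_gcd_one' hgcd
  have hv' : v = (g : ℤ) • ![u, w] := funext fun i => by
    fin_cases i <;> simp [hu, hw, mul_comm]
  rw [hv', mulVec_smul, smul_eq_zero] at hMv
  exact ⟨u, w, Int.isCoprime_iff_gcd_eq_one.2 huw, hMv.resolve_left (by positivity)⟩

theorem exists_isConj_upperTriangular_of_mulVec_eq {A : Matrix (Fin 2) (Fin 2) ℤ} {a u w : ℤ}
    (huw : IsCoprime u w) (hA : A *ᵥ ![u, w] = a • ![u, w]) :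
    ∃ m s : ℤ, IsConj A !![a, m; 0, s] := by
  obtain ⟨x, y, hxy⟩ := huw
  -- the first column of the inverse is the eigenvector `![u, w]`
  have hinv : !![u, -y; w, x] * !![x, y; -w, u] = 1 := by
    ext i j; fin_cases i <;> fin_cases j <;> simp [mul_apply] <;> linarith
  let T : (Matrix (Fin 2) (Fin 2) ℤ)ˣ := ⟨_, _, mul_eq_one_comm.1 hinv, hinv⟩
  set B := !![x, y; -w, u] * A * !![u, -y; w, x]
  have hA0 := congrFun hA 0
  have hA1 := congrFun hA 1
  simp only [mulVec, dotProduct, Fin.sum_univ_two, cons_val_zero, cons_val_one, cons_val_fin_one,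
    Pi.smul_apply, smul_eq_mul] at hA0 hA1
  have hB : B 0 0 = a ∧ B 1 0 = 0 := by
    simp only [B, cons_mul, empty_mul, Equiv.symm_apply_apply, vecMul_vecMul, of_apply,
      cons_val', vecMul, dotProduct, mul_apply, cons_val_zero, cons_val_one, cons_val_fin_one,
      Fin.sum_univ_two]
    constructor
    · linear_combination x * hA0 + y * hA1 + a * hxy
    · linear_combination u * hA1 - w * hA0
  refine ⟨B 0 1, B 1 1, isConj_iff_exists_units_mul_mul_inv.2 ⟨T, ?_⟩⟩
  ext i j; fin_cases i <;> fin_cases j <;> simp [T, B, ← hB.1, ← hB.2]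

theorem exists_isConj_upperTriangular {A : Matrix (Fin 2) (Fin 2) ℤ} {a b : ℤ}
    (hA : A.charpoly = (X - C a) * (X - C b)) : ∃ m : ℤ, IsConj A !![a, m; 0, b] := by
  have hdet : (scalar (Fin 2) a - A).det = 0 := by
    rw [← eval_charpoly, hA, eval_mul, eval_sub, eval_X, eval_C, sub_self, zero_mul]
  obtain ⟨u, w, huw, hker⟩ := exists_isCoprime_mulVec_eq_zero hdet
  rw [sub_mulVec, sub_eq_zero, scalar_apply, ← smul_one_eq_diagonal, smul_mulVec,
    one_mulVec] at hker
  obtain ⟨m, s, hconj⟩ := exists_isConj_upperTriangular_of_mulVec_eq huw hker.symm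
  have hs : (X - C a) * (X - C b) = (X - C a) * (X - C s) := by
    rw [← hA, ← charpoly_upperTriangular_fin_two a m s, charpoly_eq_of_isConj hconj]
  obtain rfl : s = b := by
    simpa using (mul_left_cancel₀ (X_sub_C_ne_zero a) hs).symm
  exact ⟨m, hconj⟩

theorem isConj_upperTriangular_units_mul (a b m k : ℤ) (ε : ℤˣ) :
    IsConj !![a, m; 0, b] !![a, ε * (m + k * (b - a)); 0, b] := by
  have hε : (ε : ℤ) * ε = 1 := by rw [← Units.val_mul, Int.units_mul_self, Units.val_one]
  have hinv : !![1, k; 0, (ε : ℤ)] * !![1, -k * ε; 0, (ε : ℤ)] = 1 := by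
    ext i j; fin_cases i <;> fin_cases j <;> simp [mul_apply, hε]
  refine ⟨⟨_, _, hinv, mul_eq_one_comm.1 hinv⟩, ?_⟩
  ext i j; fin_cases i <;> fin_cases j <;> simp [mul_apply]
  · linear_combination -(m + k * (b - a)) * hε
  · ring

theorem dvd_sub_or_dvd_add_of_isConj_upperTriangular {a b m m' : ℤ} (hab : a ≠ b)
    (h : IsConj !![a, m; 0, b] !![a, m'; 0, b]) : b - a ∣ m' - m ∨ b - a ∣ m' + m := by
  obtain ⟨T, hT⟩ := h
  have hdet : IsUnit (T : Matrix (Fin 2) (Fin 2) ℤ).det :=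
    (isUnit_iff_isUnit_det _).mp T.isUnit
  rw [det_fin_two] at hdet
  have h01 := congr_fun₂ hT.eq 0 1
  have h10 := congr_fun₂ hT.eq 1 0
  simp only [mul_apply, Fin.sum_univ_two, of_apply, cons_val', cons_val_zero, cons_val_one,
    cons_val_fin_one, mul_zero, add_zero, zero_mul, zero_add] at h01 h10
  set α := (T : Matrix (Fin 2) (Fin 2) ℤ) 0 0
  set β := (T : Matrix (Fin 2) (Fin 2) ℤ) 0 1
  set γ := (T : Matrix (Fin 2) (Fin 2) ℤ) 1 0
  set δ := (T : Matrix (Fin 2) (Fin 2) ℤ) 1 1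
  have hγ : γ = 0 := by
    have : γ * (a - b) = 0 := by linear_combination h10
    exact (mul_eq_zero.1 this).resolve_right (sub_ne_zero.2 hab)
  rw [hγ, mul_zero, sub_zero] at hdet
  have hδ : δ ^ 2 = 1 := Int.isUnit_sq (isUnit_of_mul_isUnit_right hdet)
  -- `T` is upper triangular with unit diagonal; its `(0, 1)` entry gives `m' δ = α m + β (b - a)`
  have key : m' - α * δ * m = β * δ * (b - a) := by linear_combination (-m') * hδ - δ * h01
  rcases Int.isUnit_iff.mp hdet with h | h
  · exact .inl ⟨β * δ, by linear_combination key + m * h⟩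
  · exact .inr ⟨β * δ, by linear_combination key + m * h⟩

theorem isConj_upperTriangular_iff {a b m m' : ℤ} (hab : a ≠ b) :
    IsConj !![a, m; 0, b] !![a, m'; 0, b] ↔ b - a ∣ m' - m ∨ b - a ∣ m' + m := by
  refine ⟨dvd_sub_or_dvd_add_of_isConj_upperTriangular hab, ?_⟩
  rintro (⟨k, hk⟩ | ⟨k, hk⟩)
  · rw [show m' = ((1 : ℤˣ) : ℤ) * (m + k * (b - a)) by push_cast; linear_combination hk]
    exact isConj_upperTriangular_units_mul a b m k 1
  · rw [show m' = ((-1 : ℤˣ) : ℤ) * (m + -k * (b - a)) by push_cast; linear_combination hk]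
    exact isConj_upperTriangular_units_mul a b m (-k) (-1)

theorem Int.exists_mem_Icc_dvd_sub_or_dvd_add {d : ℤ} (hd : 0 < d) (m : ℤ) :
    ∃ m₀ ∈ Set.Icc 0 (d / 2), d ∣ m₀ - m ∨ d ∣ m₀ + m := by
  have h0 := Int.emod_nonneg m hd.ne'
  have h1 := Int.emod_lt_of_pos m hd
  have hdvd : d ∣ m % d - m := (Int.mod_modEq m d).symm.dvd
  by_cases hr : 2 * (m % d) ≤ d
  · exact ⟨m % d, ⟨h0, by omega⟩, .inl hdvd⟩
  · refine ⟨d - m % d, ⟨by omega, by omega⟩, .inr ?_⟩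
    obtain ⟨k, hk⟩ := hdvd
    exact ⟨1 - k, by linear_combination -hk⟩

theorem Int.eq_of_mem_Icc_of_dvd_sub_or_dvd_add {d m m' : ℤ} (hm : m ∈ Set.Icc 0 (d / 2))
    (hm' : m' ∈ Set.Icc 0 (d / 2)) (h : d ∣ m' - m ∨ d ∣ m' + m) : m = m' := by
  obtain ⟨hm0, hm1⟩ := hm
  obtain ⟨hm0', hm1'⟩ := hm'
  rcases h with h | h
  · by_contra hne
    have := Int.natAbs_le_of_dvd_ne_zero h (sub_ne_zero.2 (Ne.symm hne))
    omega
  · by_cases hsum : m' + m = 0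
    · omega
    · have := Int.natAbs_le_of_dvd_ne_zero h hsum
      omega

/-- For integers `a < b`, the number of `ℤ`-conjugacy classes of matrices in `Mat₂(ℤ)`
with characteristic polynomial `(x-a)(x-b)` equals `⌊(b-a)/2⌋ + 1`. -/
theorem stmt_7 (a b : ℤ) (hab : a < b) :
    (Nat.card (Quot (fun A B : {M : Matrix (Fin 2) (Fin 2) ℤ //
        M.charpoly = (X - C a) * (X - C b)} =>
      ∃ T : Matrix.GeneralLinearGroup (Fin 2) ℤ,
        (T : Matrix (Fin 2) (Fin 2) ℤ) * (A : Matrix (Fin 2) (Fin 2) ℤ) *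
          ((T⁻¹ : Matrix.GeneralLinearGroup (Fin 2) ℤ) : Matrix (Fin 2) (Fin 2) ℤ) = B)) : ℤ) =
    (b - a) / 2 + 1 := by
  simp_rw [← isConj_iff_exists_units_mul_mul_inv]
  have hd : 0 < b - a := sub_pos.2 hab
  rw [natCard_quot_eq_of_transversal ⟨fun _ => .refl _, .symm, .trans⟩
      (fun m : Set.Icc 0 ((b - a) / 2) =>
        ⟨!![a, m; 0, b], charpoly_upperTriangular_fin_two a m b⟩)
      ?_ ?_, Nat.card_eq_fintype_card, Fintype.card_ofFinset, Int.card_Icc, sub_zero,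
      Int.toNat_of_nonneg (by omega)]
  · rintro ⟨m, hm⟩ ⟨m', hm'⟩ h
    exact Subtype.ext (Int.eq_of_mem_Icc_of_dvd_sub_or_dvd_add hm hm'
      ((isConj_upperTriangular_iff hab.ne).1 h))
  · rintro ⟨A, hA⟩
    obtain ⟨m, hm⟩ := exists_isConj_upperTriangular hA
    obtain ⟨m₀, hm₀, hdvd⟩ := Int.exists_mem_Icc_dvd_sub_or_dvd_add hd m
    exact ⟨⟨m₀, hm₀⟩, ((isConj_upperTriangular_iff hab.ne).2 hdvd).symm.trans hm.symm⟩
end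

section
/- There is no polynomial f(x) ∈ ℤ[x] with f(0) = 0, f(2) = 2, and f(4) = 8. -/
open Polynomial

/-- There is no integer polynomial `f` with `f(0) = 0`, `f(2) = 2` and `f(4) = 8`. -/
theorem stmt_10 : ¬ ∃ f : ℤ[X], f.eval 0 = 0 ∧ f.eval 2 = 2 ∧ f.eval 4 = 8 := by
  rintro ⟨f, h0, h2, h4⟩
  have hc : f.coeff 0 = 0 := by rw [coeff_zero_eq_eval_zero]; exact h0
  have hf : f = f.divX * X := by
    conv_lhs => rw [← f.divX_mul_X_add, hc]
    simp
  have e2 : f.divX.eval 2 * 2 = 2 := by rw [hf] at h2; simpa using h2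
  have e4 : f.divX.eval 4 * 4 = 8 := by rw [hf] at h4; simpa using h4
  have hd : (4 - 2 : ℤ) ∣ f.divX.eval 4 - f.divX.eval 2 := sub_dvd_eval_sub 4 2 f.divX
  omega
end

section
/- Let a_1 < ... < a_n be integers with a_n − a_1 ≥ 4, and let R = ℤ[x]/((x−a_1)⋯(x−a_n)). Then the unit group of R is {1, −1}. -/
/-!
A unit of `R` lifts to `f ∈ ℤ[X]` whose values `f (aᵢ)` are units of `ℤ`, i.e. `±1`. Since
`u - v ∣ f u - f v`, two of these values can differ only at points at distance at most `2`; as the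
points span an interval of length at least `4`, the only possible pattern would be `ε, -ε, ε` at
`b, b + 2, b + 4`, which fails because `f - ε` would vanish at `b` and `b + 4`, forcing
`2 * (-2) ∣ -2ε`. Hence `f` is constant `ε` on the distinct roots of `χ`, so `f ≡ ε`
modulo `χ`.
-/

open Polynomial

namespace Polynomial

section CommRing

variable {R : Type*} [CommRing R]

theorem isUnit_eval_of_isUnit_mk {p f : R[X]} {r : R} (hr : p.IsRoot r)
    (hf : IsUnit (Ideal.Quotient.mk (Ideal.span {p}) f)) : IsUnit (f.eval r) := by
  let evalAtRoot : R[X] ⧸ Ideal.span {p} →+* R :=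
    Ideal.Quotient.lift _ (evalRingHom r) fun q hq => by
      obtain ⟨s, rfl⟩ := Ideal.mem_span_singleton'.mp hq
      simp [hr.eq_zero]
  exact hf.map evalAtRoot

variable [IsDomain R]

theorem prod_X_sub_C_dvd_of_isRoot {ι : Type*} [Fintype ι] {a : ι → R}
    (ha : Function.Injective a) {p : R[X]} (hp : ∀ i, p.IsRoot (a i)) :
    ∏ i, (X - C (a i)) ∣ p := by
  rcases eq_or_ne p 0 with rfl | hp0
  · exact dvd_zero _
  have hle : Finset.univ.val.map a ≤ p.roots := by
    rw [Multiset.le_iff_subset (Finset.univ.nodup.map ha)]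
    intro r hr
    obtain ⟨i, -, rfl⟩ := Multiset.mem_map.mp hr
    exact (mem_roots hp0).mpr (hp i)
  have hdvd := (Multiset.prod_X_sub_C_dvd_iff_le_roots hp0 _).mpr hle
  rwa [Multiset.map_map] at hdvd

theorem mul_sub_dvd_eval_of_isRoot {p : R[X]} {u w : R} (hu : p.IsRoot u)
    (hw : p.IsRoot w) (huw : u ≠ w) (v : R) : (v - u) * (v - w) ∣ p.eval v := by
  obtain ⟨q, rfl⟩ := dvd_iff_isRoot.mpr hu
  have hqw : q.IsRoot w := by
    simpa [IsRoot, sub_ne_zero.mpr huw.symm] using hw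
  obtain ⟨k, rfl⟩ := dvd_iff_isRoot.mpr hqw
  exact ⟨k.eval v, by simp [mul_assoc]⟩

end CommRing

section Int

variable {f : ℤ[X]}

theorem eval_eq_of_isUnit_of_two_lt_abs {u v : ℤ} (hu : IsUnit (f.eval u))
    (hv : IsUnit (f.eval v)) (huv : 2 < |u - v|) : f.eval u = f.eval v := by
  by_contra hne
  have htwo : u - v ∣ 2 := by
    have hdiff : f.eval u - f.eval v = 2 ∨ f.eval u - f.eval v = -2 := by
      rcases Int.isUnit_iff.mp hu with h | h <;> rcases Int.isUnit_iff.mp hv with h' | h' <;>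
        omega
    rcases hdiff with h | h
    · exact h ▸ sub_dvd_eval_sub u v f
    · exact dvd_neg.mp (h ▸ sub_dvd_eval_sub u v f)
  have := Int.le_of_dvd two_pos ((abs_dvd _ _).mpr htwo)
  omega

theorem eval_add_two_eq_of_isUnit {b : ℤ} (hb : IsUnit (f.eval b))
    (hb2 : IsUnit (f.eval (b + 2))) (hb4 : f.eval (b + 4) = f.eval b) :
    f.eval (b + 2) = f.eval b := by
  obtain ⟨k, hk⟩ := mul_sub_dvd_eval_of_isRoot (p := f - C (f.eval b)) (u := b) (w := b + 4)
    (by simp) (by simp [hb4]) (by omega) (b + 2)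
  simp only [eval_sub, eval_C] at hk
  rcases Int.isUnit_iff.mp hb with h | h <;> rcases Int.isUnit_iff.mp hb2 with h' | h' <;> omega

theorem eval_eq_of_four_le_sub {u v w : ℤ} (h4 : 4 ≤ w - u) (hu : IsUnit (f.eval u))
    (hv : IsUnit (f.eval v)) (hw : IsUnit (f.eval w)) : f.eval v = f.eval u := by
  have hwu : f.eval w = f.eval u :=
    eval_eq_of_isUnit_of_two_lt_abs hw hu (by rw [abs_of_pos (by omega)]; omega)
  by_cases hvu : 2 < |v - u|
  · exact eval_eq_of_isUnit_of_two_lt_abs hv hu hvu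
  by_cases hvw : 2 < |v - w|
  · exact (eval_eq_of_isUnit_of_two_lt_abs hv hw hvw).trans hwu
  obtain ⟨rfl, rfl⟩ : v = u + 2 ∧ w = u + 4 := by
    rw [not_lt, abs_le] at hvu hvw
    omega
  exact eval_add_two_eq_of_isUnit hu hv hwu

end Int

end Polynomial

/-- If `a 0 < ⋯ < a n` are integers with `a n - a 0 ≥ 4`, then the units of
`R = ℤ[x]/((x - a 0)⋯(x - a n))` are exactly `1` and `-1`. -/
theorem stmt_11 (n : ℕ) (a : Fin (n + 1) → ℤ) (ha : StrictMono a)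
    (h4 : a (Fin.last n) - a 0 ≥ 4) :
    ∀ x : ℤ[X] ⧸ Ideal.span {∏ i, (X - C (a i))},
      IsUnit x ↔ x = 1 ∨ x = -1 := by
  intro x
  refine ⟨fun hx => ?_, by rintro (rfl | rfl); exacts [isUnit_one, ⟨-1, rfl⟩]⟩
  obtain ⟨f, rfl⟩ := Ideal.Quotient.mk_surjective x
  have hroot (i) : (∏ j, (X - C (a j))).IsRoot (a i) := by
    simp [IsRoot, eval_prod, Finset.prod_eq_zero_iff, sub_eq_zero]
  have hunit (i) : IsUnit (f.eval (a i)) := isUnit_eval_of_isUnit_mk (hroot i) hx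
  have hconst (i) : f.eval (a i) = f.eval (a 0) :=
    eval_eq_of_four_le_sub h4 (hunit 0) (hunit i) (hunit (Fin.last n))
  have hmk : Ideal.Quotient.mk _ f = Ideal.Quotient.mk _ (C (f.eval (a 0))) :=
    Ideal.Quotient.eq.mpr <| Ideal.mem_span_singleton.mpr <|
      prod_X_sub_C_dvd_of_isRoot ha.injective fun i => by simp [hconst i]
  rcases Int.isUnit_iff.mp (hunit 0) with h | h <;> simp [hmk, h]
end

section
/- Let a_1 < ... < a_n be integers, f ∈ ℤ[x], and suppose f(a_i) ∈ {1, −1} for all i and f(a_1) ≠ f(a_j) for some j with 1 < j < n. If f(a_1) = f(a_n), then (a_j − a_1)(a_n − a_j) ≤ 2. -/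
open Polynomial

/-! If `f(u) = f(w)` with `u ≠ w`, then `(x - u)(x - w)` divides `f - f(u)`, so
`(v - u)(v - w) ∣ f(v) - f(u)` for every `v`. For integers with values `±1` the right-hand side
is `±2` when `f(v) ≠ f(u)`, and a divisor of `2` is at most `2`. -/

theorem mul_sub_dvd_eval_sub_of_eval_eq {R : Type*} [CommRing R] [IsDomain R] (f : R[X])
    {u w : R} (huw : u ≠ w) (h : f.eval u = f.eval w) (v : R) :
    (v - u) * (v - w) ∣ f.eval v - f.eval u := by
  obtain ⟨q, hq⟩ : X - C u ∣ f - C (f.eval u) := dvd_iff_isRoot.2 (by simp)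
  have hqw : q.IsRoot w := by
    have hw := congrArg (eval w) hq
    rw [eval_sub, eval_C, ← h, sub_self, eval_mul, eval_sub, eval_X, eval_C, eq_comm,
      mul_eq_zero] at hw
    exact hw.resolve_left (sub_ne_zero.2 huw.symm)
  obtain ⟨r, rfl⟩ := dvd_iff_isRoot.2 hqw
  refine ⟨r.eval v, ?_⟩
  simpa [mul_assoc] using congrArg (eval v) hq

theorem abs_sub_eq_two_of_ne {x y : ℤ} (hx : x = 1 ∨ x = -1) (hy : y = 1 ∨ y = -1)
    (hxy : x ≠ y) : |x - y| = 2 := by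
  rcases hx with rfl | rfl <;> rcases hy with rfl | rfl <;> simp_all

theorem stmt_12_general (n : ℕ) (a : Fin (n + 1) → ℤ) (ha : StrictMono a) (f : ℤ[X])
    (hf : ∀ i, f.eval (a i) = 1 ∨ f.eval (a i) = -1)
    (j : Fin (n + 1))
    (hne : f.eval (a 0) ≠ f.eval (a j))
    (heq : f.eval (a 0) = f.eval (a (Fin.last n))) :
    (a j - a 0) * (a (Fin.last n) - a j) ≤ 2 := by
  have hends : a 0 ≠ a (Fin.last n) := by
    refine ha.injective.ne fun h0 => hne ?_
    have hj : j ≤ 0 := h0 ▸ Fin.le_last j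
    rw [Fin.le_zero_iff.1 hj]
  have hdvd : (a j - a 0) * (a j - a (Fin.last n)) ∣ f.eval (a j) - f.eval (a 0) :=
    mul_sub_dvd_eval_sub_of_eval_eq f hends heq (a j)
  have htwo : |f.eval (a j) - f.eval (a 0)| = 2 := abs_sub_eq_two_of_ne (hf j) (hf 0) hne.symm
  rw [← neg_sub (a (Fin.last n)), mul_neg, neg_dvd, ← dvd_abs, htwo] at hdvd
  exact Int.le_of_dvd two_pos hdvd

/-- Let `a 0 < ⋯ < a n` be integers, `f ∈ ℤ[x]` with `f(a i) ∈ {1, -1}` for all `i`, and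
suppose `f(a 0) ≠ f(a j)` for some `0 < j < n` while `f(a 0) = f(a n)`. Then
`(a j - a 0)(a n - a j) ≤ 2`. -/
theorem stmt_12 (n : ℕ) (a : Fin (n + 1) → ℤ) (ha : StrictMono a) (f : ℤ[X])
    (hf : ∀ i, f.eval (a i) = 1 ∨ f.eval (a i) = -1)
    (j : Fin (n + 1)) (hj0 : 0 < j) (hjn : j < Fin.last n)
    (hne : f.eval (a 0) ≠ f.eval (a j))
    (heq : f.eval (a 0) = f.eval (a (Fin.last n))) :
    (a j - a 0) * (a (Fin.last n) - a j) ≤ 2 :=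
  stmt_12_general n a ha f hf j hne heq
end

section
/- For any integers b_1, b_2, ..., b_m, the product ∏_{1 ≤ i < j ≤ m} (j − i) divides the product ∏_{1 ≤ i < j ≤ m} (b_j − b_i). -/
/-!
Both products are Vandermonde determinants. At the nodes `0, 1, …, m - 1` the determinant is the
superfactorial `∏_{k<m} k!`, and it divides every integer Vandermonde determinant: after shifting
the nodes to be nonnegative and replacing the powers `x ^ j` by the falling factorials
`j! * choose x j` (column operations), the determinant becomes `∏ j! * det (choose (b i - min b) j)`.
-/

open Finset Matrix

theorem Matrix.det_vandermonde_eq_prod_filter_lt {R : Type*} [CommRing R] {n : ℕ}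
    (v : Fin n → R) :
    (vandermonde v).det =
      ∏ p ∈ univ.filter (fun p : Fin n × Fin n => p.1 < p.2), (v p.2 - v p.1) := by
  rw [det_vandermonde, prod_filter, ← univ_product_univ, prod_product]
  refine prod_congr rfl fun i _ => ?_
  rw [← filter_lt_eq_Ioi, prod_filter]

/-- For any integers `b 1, ..., b m`, the product `∏_{i<j} (j - i)` divides
`∏_{i<j} (b j - b i)`. -/
theorem stmt_13 (m : ℕ) (b : Fin m → ℤ) :
    (∏ p ∈ Finset.univ.filter (fun p : Fin m × Fin m => p.1 < p.2),
        ((p.2 : ℤ) - (p.1 : ℤ))) ∣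
      ∏ p ∈ Finset.univ.filter (fun p : Fin m × Fin m => p.1 < p.2),
        (b p.2 - b p.1) := by
  cases m with
  | zero => simp
  | succ n =>
    rw [← det_vandermonde_eq_prod_filter_lt (fun i : Fin (n + 1) => (i : ℤ)),
      ← det_vandermonde_eq_prod_filter_lt, det_vandermonde_id_eq_superFactorial]
    exact superFactorial_dvd_vandermonde_det b
end

section
/- Let a < b be integers and R = ℤ[x]/((x−a)(x−b)). For nonzero integers u, v, the product of ideals (x−b, u)·(x−b, v) in R equals the ideal ((x−b)·gcd(u, v, a−b), uv), and hence is equivalent (up to multiplication by an element of K^×) to the ideal (x−b, uv/gcd(u, v, a−b)). -/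
/-!
In `R` the element `t = x - b` satisfies `t² = (a - b) t`, because `(x - a)(x - b) = 0`. So of the
four generators `t², tv, ut, uv` of `(t, u)(t, v)`, the first three are the multiples of `t` by
`a - b`, `v` and `u`, which by Bézout generate `t·g`. Since the modulus is monic, the integer `g`
is a nonzerodivisor of `R`, and `g·(t, uv/g) = (tg, uv)`.
-/

open Polynomial

namespace Ideal

variable {R : Type*} [CommRing R]

theorem span_pair_mul_span_pair_of_mul_self_eq {t d u v g : R} (ht : t * t = d * t)
    (hgu : g ∣ u) (hgv : g ∣ v) (hgd : g ∣ d) (hg : g ∈ span {u, v, d}) :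
    span {t, u} * span {t, v} = span {t * g, u * v} := by
  rw [span_pair_mul_span_pair]
  apply le_antisymm
  · have hmul : ∀ x, g ∣ x → t * x ∈ span {t * g, u * v} := fun x ⟨k, hk⟩ ↦ by
      rw [hk, ← mul_assoc]
      exact mul_mem_right _ _ (subset_span (Set.mem_insert _ _))
    simp only [span_le, Set.insert_subset_iff, Set.singleton_subset_iff, SetLike.mem_coe]
    refine ⟨?_, hmul v hgv, mul_comm t u ▸ hmul u hgu, subset_span (by simp)⟩
    rw [ht, mul_comm d]
    exact hmul d hgd
  · obtain ⟨α, β, γ, hαβγ⟩ := Submodule.mem_span_triple.mp hg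
    simp only [span_le, Set.insert_subset_iff, Set.singleton_subset_iff, SetLike.mem_coe]
    refine ⟨?_, subset_span (by simp)⟩
    have htg : t * g = α * (u * t) + β * (t * v) + γ * (t * t) := by
      rw [← hαβγ, ht, smul_eq_mul, smul_eq_mul, smul_eq_mul]; ring
    rw [htg]
    refine add_mem (add_mem ?_ ?_) ?_ <;> exact mul_mem_left _ _ (subset_span (by simp))

theorem span_singleton_mul_span_pair (r x y : R) :
    span {r} * span {x, y} = span {r * x, r * y} := by
  rw [span_mul_span', Set.singleton_mul, Set.image_pair]

end Ideal

theorem Int.gcd_gcd_mem_span (u v w : ℤ) : (u.gcd (v.gcd w) : ℤ) ∈ Ideal.span {u, v, w} := by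
  refine Submodule.mem_span_triple.mpr ⟨u.gcdA (v.gcd w), v.gcdA w * u.gcdB (v.gcd w),
    v.gcdB w * u.gcdB (v.gcd w), ?_⟩
  rw [Int.gcd_eq_gcd_ab u, Int.gcd_eq_gcd_ab v w]
  simp only [smul_eq_mul]
  ring

namespace Polynomial

variable {R : Type*} [CommRing R]

theorem Monic.dvd_of_dvd_mul_C [IsDomain R] {f p : R[X]} (hf : f.Monic) {g : R} (hg : g ≠ 0)
    (h : f ∣ p * C g) : f ∣ p := by
  rw [← modByMonic_eq_zero_iff_dvd hf] at h ⊢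
  rw [mul_comm, ← smul_eq_C_mul, smul_modByMonic] at h
  exact (smul_eq_zero.mp h).resolve_left hg

theorem Monic.mk_C_mem_nonZeroDivisors [IsDomain R] {f : R[X]} (hf : f.Monic) {g : R}
    (hg : g ≠ 0) :
    Ideal.Quotient.mk (Ideal.span {f}) (C g) ∈ nonZeroDivisors (R[X] ⧸ Ideal.span {f}) := by
  rw [mem_nonZeroDivisors_iff_right]
  rintro x hx
  obtain ⟨p, rfl⟩ := Ideal.Quotient.mk_surjective x
  rw [← map_mul, Ideal.Quotient.eq_zero_iff_mem, Ideal.mem_span_singleton] at hx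
  rw [Ideal.Quotient.eq_zero_iff_mem, Ideal.mem_span_singleton]
  exact hf.dvd_of_dvd_mul_C hg hx

theorem mk_X_sub_C_mul_self (a b : R) :
    Ideal.Quotient.mk (Ideal.span {(X - C a) * (X - C b)}) ((X - C b) * (X - C b)) =
      Ideal.Quotient.mk _ (C (a - b) * (X - C b)) := by
  rw [Ideal.Quotient.eq, Ideal.mem_span_singleton]
  exact ⟨1, by simp only [map_sub]; ring⟩

end Polynomial

theorem stmt_16_general (a b u v : ℤ) (hu : u ≠ 0) :
    let χ : ℤ[X] := (X - C a) * (X - C b)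
    let mk := Ideal.Quotient.mk (Ideal.span {χ})
    let g : ℤ := Int.gcd u (Int.gcd v (a - b))
    let I := Ideal.span {mk (X - C b), mk (C u)}
    let J := Ideal.span {mk (X - C b), mk (C v)}
    I * J = Ideal.span {mk ((X - C b) * C g), mk (C (u * v))} ∧
    ∃ r s : ℤ[X] ⧸ Ideal.span {χ},
      r ∈ nonZeroDivisors (ℤ[X] ⧸ Ideal.span {χ}) ∧
      s ∈ nonZeroDivisors (ℤ[X] ⧸ Ideal.span {χ}) ∧
      Ideal.span {r} * (I * J) =
        Ideal.span {s} * Ideal.span {mk (X - C b), mk (C (u * v / g))} := by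
  intro χ mk g I J
  let φ := mk.comp C
  have hgu : g ∣ u := Int.gcd_dvd_left _ _
  have hgv : g ∣ v := (Int.gcd_dvd_right _ _).trans (Int.gcd_dvd_left _ _)
  have hgd : g ∣ a - b := (Int.gcd_dvd_right _ _).trans (Int.gcd_dvd_right _ _)
  have hg : g ≠ 0 := Int.natCast_ne_zero.mpr (Int.gcd_ne_zero_left hu)
  have hg_mem : φ g ∈ Ideal.span {φ u, φ v, φ (a - b)} := by
    simpa only [Ideal.map_span, Set.image_insert_eq, Set.image_singleton] using
      Ideal.mem_map_of_mem φ (Int.gcd_gcd_mem_span u v (a - b))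
  have hsq : mk (X - C b) * mk (X - C b) = mk (C (a - b)) * mk (X - C b) := by
    rw [← map_mul, ← map_mul]
    exact mk_X_sub_C_mul_self a b
  have hIJ : I * J = Ideal.span {mk ((X - C b) * C g), mk (C (u * v))} := by
    rw [map_mul, map_mul]
    exact Ideal.span_pair_mul_span_pair_of_mul_self_eq hsq
      (map_dvd φ hgu) (map_dvd φ hgv) (map_dvd φ hgd) hg_mem
  have hχ : χ.Monic := (monic_X_sub_C a).mul (monic_X_sub_C b)
  refine ⟨hIJ, 1, φ g, one_mem _, hχ.mk_C_mem_nonZeroDivisors hg, ?_⟩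
  have huv : u * v = g * (u * v / g) := (Int.mul_ediv_cancel' (hgu.mul_right v)).symm
  rw [Ideal.span_singleton_one, Ideal.top_mul, hIJ, Ideal.span_singleton_mul_span_pair]
  conv_lhs => rw [huv]
  simp only [φ, RingHom.comp_apply, map_mul, mul_comm]

/-- In `R = ℤ[x]/((x-a)(x-b))` with `a < b` and nonzero integers `u, v`, the product of
ideals `(x-b, u)·(x-b, v)` equals `((x-b)·gcd(u,v,a-b), uv)`, hence is equivalent (up to
multiplication by a unit of the total quotient ring, i.e. `r·I = s·J` for nonzerodivisors
`r, s` of `R`) to the ideal `(x-b, uv/gcd(u,v,a-b))`. -/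
theorem stmt_16 (a b u v : ℤ) (hab : a < b) (hu : u ≠ 0) (hv : v ≠ 0) :
    let χ : ℤ[X] := (X - C a) * (X - C b)
    let mk := Ideal.Quotient.mk (Ideal.span {χ})
    let g : ℤ := Int.gcd u (Int.gcd v (a - b))
    let I := Ideal.span {mk (X - C b), mk (C u)}
    let J := Ideal.span {mk (X - C b), mk (C v)}
    I * J = Ideal.span {mk ((X - C b) * C g), mk (C (u * v))} ∧
    ∃ r s : ℤ[X] ⧸ Ideal.span {χ},
      r ∈ nonZeroDivisors (ℤ[X] ⧸ Ideal.span {χ}) ∧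
      s ∈ nonZeroDivisors (ℤ[X] ⧸ Ideal.span {χ}) ∧
      Ideal.span {r} * (I * J) =
        Ideal.span {s} * Ideal.span {mk (X - C b), mk (C (u * v / g))} :=
  stmt_16_general a b u v hu
end

section
/- Let a < b < c be integers and set K = {(u mod (b−a)(c−a), v mod (c−b)(c−a)) ∈ (ℤ/(b−a)(c−a))^× × (ℤ/(c−b)(c−a))^× : (b−a) ∣ (u−1), (c−b) ∣ (v−1), and (c−a) ∣ (u(v−1)/(c−b) − (u−1)/(b−a))}. Then K is a subgroup of (ℤ/(b−a)(c−a))^× × (ℤ/(c−b)(c−a))^×. -/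
/-- For integers `a < b < c`, the set
`K = {(u mod (b-a)(c-a), v mod (c-b)(c-a)) : (b-a) ∣ u-1, (c-b) ∣ v-1,
(c-a) ∣ u(v-1)/(c-b) - (u-1)/(b-a)}` is a subgroup of
`(ℤ/(b-a)(c-a))ˣ × (ℤ/(c-b)(c-a))ˣ`. -/
theorem stmt_19 (a b c : ℤ) (hab : a < b) (hbc : b < c) :
    ∃ H : Subgroup ((ZMod ((b - a) * (c - a)).toNat)ˣ × (ZMod ((c - b) * (c - a)).toNat)ˣ),
      (H : Set ((ZMod ((b - a) * (c - a)).toNat)ˣ × (ZMod ((c - b) * (c - a)).toNat)ˣ)) =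
      {p | ∃ u v : ℤ,
        ((p.1 : ZMod ((b - a) * (c - a)).toNat) = (u : ZMod ((b - a) * (c - a)).toNat)) ∧
        ((p.2 : ZMod ((c - b) * (c - a)).toNat) = (v : ZMod ((c - b) * (c - a)).toNat)) ∧
        (b - a) ∣ (u - 1) ∧ (c - b) ∣ (v - 1) ∧
        (c - a) ∣ (u * ((v - 1) / (c - b)) - (u - 1) / (b - a))} := by
  have hA : b - a ≠ 0 := by omega
  have hB : c - b ≠ 0 := by omega
  set G := ((ZMod ((b - a) * (c - a)).toNat)ˣ × (ZMod ((c - b) * (c - a)).toNat)ˣ) with hG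
  set S : Set G :=
      {p | ∃ u v : ℤ,
        ((p.1 : ZMod ((b - a) * (c - a)).toNat) = (u : ZMod ((b - a) * (c - a)).toNat)) ∧
        ((p.2 : ZMod ((c - b) * (c - a)).toNat) = (v : ZMod ((c - b) * (c - a)).toNat)) ∧
        (b - a) ∣ (u - 1) ∧ (c - b) ∣ (v - 1) ∧
        (c - a) ∣ (u * ((v - 1) / (c - b)) - (u - 1) / (b - a))} with hSdef
  have hone : (1 : G) ∈ S := by
    refine ⟨1, 1, ?_, ?_, ?_, ?_, ?_⟩ <;> simp
  have hmul : ∀ p q : G, p ∈ S → q ∈ S → p * q ∈ S := by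
    rintro p q ⟨u1, v1, hu1, hv1, ⟨x1, hx1⟩, ⟨y1, hy1⟩, hd1⟩
      ⟨u2, v2, hu2, hv2, ⟨x2, hx2⟩, ⟨y2, hy2⟩, hd2⟩
    have hu1' : u1 = (b - a) * x1 + 1 := by linarith
    have hu2' : u2 = (b - a) * x2 + 1 := by linarith
    have hv1' : v1 = (c - b) * y1 + 1 := by linarith
    have hv2' : v2 = (c - b) * y2 + 1 := by linarith
    subst hu1' hu2' hv1' hv2'
    have e1 : ((b - a) * x1 + 1) * (((c - b) * y1 + 1 - 1) / (c - b))
        - ((b - a) * x1 + 1 - 1) / (b - a) = ((b - a) * x1 + 1) * y1 - x1 := by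
      rw [add_sub_cancel_right, add_sub_cancel_right,
        Int.mul_ediv_cancel_left _ hB, Int.mul_ediv_cancel_left _ hA]
    have e2 : ((b - a) * x2 + 1) * (((c - b) * y2 + 1 - 1) / (c - b))
        - ((b - a) * x2 + 1 - 1) / (b - a) = ((b - a) * x2 + 1) * y2 - x2 := by
      rw [add_sub_cancel_right, add_sub_cancel_right,
        Int.mul_ediv_cancel_left _ hB, Int.mul_ediv_cancel_left _ hA]
    rw [e1] at hd1; rw [e2] at hd2
    obtain ⟨k1, hk1⟩ := hd1
    obtain ⟨k2, hk2⟩ := hd2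
    refine ⟨((b - a) * x1 + 1) * ((b - a) * x2 + 1),
      ((c - b) * y1 + 1) * ((c - b) * y2 + 1), ?_, ?_, ?_, ?_, ?_⟩
    · rw [Prod.fst_mul, Units.val_mul, hu1, hu2]; push_cast; ring
    · rw [Prod.snd_mul, Units.val_mul, hv1, hv2]; push_cast; ring
    · exact ⟨(b - a) * x1 * x2 + x1 + x2, by ring⟩
    · exact ⟨(c - b) * y1 * y2 + y1 + y2, by ring⟩
    · have hq1 : (((c - b) * y1 + 1) * ((c - b) * y2 + 1) - 1) / (c - b)
          = ((c - b) * y1 + 1) * y2 + y1 := by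
        have h : ((c - b) * y1 + 1) * ((c - b) * y2 + 1) - 1
            = (c - b) * (((c - b) * y1 + 1) * y2 + y1) := by ring
        rw [h, Int.mul_ediv_cancel_left _ hB]
      have hq2 : (((b - a) * x1 + 1) * ((b - a) * x2 + 1) - 1) / (b - a)
          = ((b - a) * x1 + 1) * x2 + x1 := by
        have h : ((b - a) * x1 + 1) * ((b - a) * x2 + 1) - 1
            = (b - a) * (((b - a) * x1 + 1) * x2 + x1) := by ring
        rw [h, Int.mul_ediv_cancel_left _ hA]
      rw [hq1, hq2]
      refine ⟨((b - a) * x1 + 1) * ((c - b) * y1 + 1) * k2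
        + (((b - a) * x2 + 1) + (c - b) * x2) * k1 + x1 * x2, ?_⟩
      linear_combination (((b - a) * x1 + 1) * ((c - b) * y1 + 1)) * hk2
        + (((b - a) * x2 + 1) + (c - b) * x2) * hk1
  have hpow : ∀ (n : ℕ) (p : G), p ∈ S → p ^ n ∈ S := by
    intro n p hp
    induction n with
    | zero => simpa using hone
    | succ k ih => rw [pow_succ]; exact hmul _ _ ih hp
  haveI : NeZero ((b - a) * (c - a)).toNat :=
    ⟨by simp only [Ne, Int.toNat_eq_zero, not_le]; exact mul_pos (by omega) (by omega)⟩
  haveI : NeZero ((c - b) * (c - a)).toNat :=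
    ⟨by simp only [Ne, Int.toNat_eq_zero, not_le]; exact mul_pos (by omega) (by omega)⟩
  have hinv : ∀ p : G, p ∈ S → p⁻¹ ∈ S := by
    intro p hp
    have hcard : p ^ Fintype.card G = 1 := pow_card_eq_one
    have h1 : 1 ≤ Fintype.card G := Fintype.card_pos
    have hmulone : p ^ (Fintype.card G - 1) * p = 1 := by
      rw [← pow_succ, Nat.sub_add_cancel h1]; exact hcard
    have hpinv : p⁻¹ = p ^ (Fintype.card G - 1) :=
      (eq_inv_of_mul_eq_one_left hmulone).symm
    rw [hpinv]
    exact hpow _ _ hp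
  exact ⟨{ carrier := S, one_mem' := hone, mul_mem' := fun {x y} hx hy => hmul x y hx hy,
           inv_mem' := fun {x} hx => hinv x hx }, rfl⟩
end
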